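/- Let M be a discrete-time Markov process with state space S such that there exists a probability measure π on S satisfying: for every x ∈ S, lim_{n→∞} sup_{m ∈ ℕ} ∫_S d_W(p^n(y,·), π) p^m(x,dy) = 0. Then for every p ≥ 1, every bounded Lipschitz function f : S → ℝ, and every initial distribution μ ∈ P(S), the time averages (1/n) Σ_{k=0}^{n-1} f(M_k) converge to ∫_S f dπ in L^p(Ω, P^μ) as n → ∞. -/

import Mathlib

/-!
Put `g := f - ∫ f dπ`; as `d ≤ 1`, `g` is bounded by its Lipschitz constant `K`. The Markov
property turns `E^x[g(M_s) g(M_{s+t})]` into `E^x[g(M_s) (P_t g)(M_s)]`, and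
`|P_t g(y)| ≤ K d_W(p^t(y,·), π)`, so under `P^μ` the correlation of `g(M_j)` and `g(M_k)` is at
most `b(|j - k|)` with `b(t) = K² ∫ sup_m ∫ d_W(p^t(y,·), π) p^m(x,dy) μ(dx) → 0`. Summing the
correlations gives `E[(n⁻¹ ∑_{k<n} g(M_k))²] ≤ 2 n⁻¹ ∑_{t<n} b(t) → 0`, and boundedness upgrades
`L²` to `Lᵖ`. The only delicate point is that `y ↦ d_W(p^t(y,·), π)` is measurable: on a separable
space `d_W` is already the supremum over the countably many functions
`x ↦ min_{i<n} (q_i + d(x, D_i))` with rational `q_i` and `D` dense.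
-/

open MeasureTheory Filter Topology

/-- The `L¹`-Wasserstein (Kantorovich–Rubinstein) distance between two measures:
`d_W(μ,ν) = sup { |∫ f dμ - ∫ f dν| : f 1-Lipschitz }`. -/
noncomputable def wassDist {S : Type*} [MeasurableSpace S] [PseudoMetricSpace S]
    (μ ν : Measure S) : ℝ :=
  ⨆ f : {g : S → ℝ // LipschitzWith 1 g}, |(∫ y, f.1 y ∂μ) - ∫ y, f.1 y ∂ν|

/-- A (normal, temporally homogeneous) discrete-time Markov process: a family of probability
measures `P x` on a sample space `Ω` depending measurably on the starting point `x`, a process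
`M` such that `M 0 = x` holds `P x`-a.s., satisfying the Markov property with respect to the
natural filtration, with temporally homogeneous transition function `(P x).map (M t)`. -/
structure DiscreteMarkovProcess (S : Type*) [MeasurableSpace S]
    (Ω : Type*) [MeasurableSpace Ω] where
  P : S → Measure Ω
  M : ℕ → Ω → S
  prob : ∀ x, IsProbabilityMeasure (P x)
  measM : ∀ n, Measurable (M n)
  measP : Measurable P
  start : ∀ x, (P x).map (M 0) = Measure.dirac x
  markov : ∀ (x : S) (s t : ℕ) (g : S → ℝ), Measurable g → (∃ C, ∀ z, |g z| ≤ C) →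
    (P x)[(fun ω => g (M (s + t) ω)) |
        ⨆ u : {u : ℕ // u ≤ s}, MeasurableSpace.comap (M u.1) inferInstance]
      =ᵐ[P x] fun ω => ∫ y, g y ∂((P (M s ω)).map (M t))

/-- The transition function `p t x (dy) = P^x (M_t ∈ dy)` of a discrete-time Markov process. -/
noncomputable def DiscreteMarkovProcess.p {S : Type*} [MeasurableSpace S]
    {Ω : Type*} [MeasurableSpace Ω] (X : DiscreteMarkovProcess S Ω) (n : ℕ) (x : S) :
    Measure S := (X.P x).map (X.M n)

open ProbabilityTheory Finset
open scoped NNReal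

lemma sum_range_nat_dist_le {b : ℕ → ℝ} (hb : ∀ t, 0 ≤ b t) {j n : ℕ} (hj : j < n) :
    ∑ k ∈ range n, b (Nat.dist j k) ≤ 2 * ∑ t ∈ range n, b t := by
  have hfiber (t : ℕ) : #{k ∈ range n | Nat.dist j k = t} ≤ 2 := by
    refine (card_le_card fun k hk => ?_).trans (card_le_two (a := j + t) (b := j - t))
    rw [mem_filter, Nat.dist] at hk
    rw [mem_insert, mem_singleton]
    omega
  have himage : image (Nat.dist j) (range n) ⊆ range n := by
    intro t ht
    simp only [mem_image, mem_range, Nat.dist] at ht ⊢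
    omega
  calc ∑ k ∈ range n, b (Nat.dist j k)
      = ∑ t ∈ image (Nat.dist j) (range n), #{k ∈ range n | Nat.dist j k = t} • b t :=
        sum_comp b _
    _ ≤ ∑ t ∈ image (Nat.dist j) (range n), 2 * b t :=
        sum_le_sum fun t _ => by
          rw [nsmul_eq_mul]
          exact mul_le_mul_of_nonneg_right (by exact_mod_cast hfiber t) (hb t)
    _ ≤ ∑ t ∈ range n, 2 * b t :=
        sum_le_sum_of_subset_of_nonneg himage fun t _ _ => mul_nonneg zero_le_two (hb t)
    _ = 2 * ∑ t ∈ range n, b t := (mul_sum _ _ _).symm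

lemma abs_inv_mul_sum_range_le {a : ℕ → ℝ} {B : ℝ} (ha : ∀ k, |a k| ≤ B) (n : ℕ) :
    |(n : ℝ)⁻¹ * ∑ k ∈ range n, a k| ≤ B := by
  rcases n.eq_zero_or_pos with rfl | hn
  · simpa using (abs_nonneg _).trans (ha 0)
  rw [abs_mul, abs_inv, Nat.abs_cast, inv_mul_le_iff₀ (by positivity)]
  calc |∑ k ∈ range n, a k| ≤ ∑ k ∈ range n, |a k| := abs_sum_le_sum_abs _ _
    _ ≤ ∑ _k ∈ range n, B := sum_le_sum fun k _ => ha k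
    _ = n * B := by simp

theorem tendsto_integral_sq_average_of_abs_integral_mul_le {Ω : Type*} [MeasurableSpace Ω]
    {Q : Measure Ω} {Y : ℕ → Ω → ℝ} (hint : ∀ j k, Integrable (fun ω => Y j ω * Y k ω) Q)
    {b : ℕ → ℝ} (hb : Tendsto b atTop (𝓝 0))
    (hcov : ∀ j k, |∫ ω, Y j ω * Y k ω ∂Q| ≤ b (Nat.dist j k)) :
    Tendsto (fun n : ℕ => ∫ ω, ((n : ℝ)⁻¹ * ∑ k ∈ range n, Y k ω) ^ 2 ∂Q) atTop (𝓝 0) := by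
  have hb_nonneg (t : ℕ) : 0 ≤ b t := by
    simpa [Nat.dist_zero_left] using (abs_nonneg _).trans (hcov 0 t)
  have hbound (n : ℕ) : ∫ ω, ((n : ℝ)⁻¹ * ∑ k ∈ range n, Y k ω) ^ 2 ∂Q
      ≤ 2 * ((n : ℝ)⁻¹ * ∑ t ∈ range n, b t) := by
    have hexpand : ∫ ω, ((n : ℝ)⁻¹ * ∑ k ∈ range n, Y k ω) ^ 2 ∂Q
        = (n : ℝ)⁻¹ ^ 2 * ∑ j ∈ range n, ∑ k ∈ range n, ∫ ω, Y j ω * Y k ω ∂Q := by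
      simp_rw [mul_pow, sq (∑ k ∈ range n, _), sum_mul_sum]
      rw [integral_const_mul,
        integral_finsetSum _ fun j _ => integrable_finsetSum _ fun k _ => hint j k]
      simp_rw [integral_finsetSum _ fun k _ => hint _ k]
    calc ∫ ω, ((n : ℝ)⁻¹ * ∑ k ∈ range n, Y k ω) ^ 2 ∂Q
        ≤ (n : ℝ)⁻¹ ^ 2 * ∑ j ∈ range n, ∑ k ∈ range n, b (Nat.dist j k) := by
          rw [hexpand]
          gcongr with j _ k _
          exact (le_abs_self _).trans (hcov j k)
      _ ≤ (n : ℝ)⁻¹ ^ 2 * ∑ _j ∈ range n, 2 * ∑ t ∈ range n, b t := by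
          gcongr with j hj
          exact sum_range_nat_dist_le hb_nonneg (mem_range.1 hj)
      _ = 2 * ((n : ℝ)⁻¹ * ∑ t ∈ range n, b t) := by
          rw [sum_const, card_range, nsmul_eq_mul]
          rcases eq_or_ne (n : ℝ) 0 with hn | hn
          · simp [hn]
          · field_simp
  refine tendsto_of_tendsto_of_tendsto_of_le_of_le tendsto_const_nhds ?_
    (fun n => integral_nonneg fun ω => sq_nonneg _) hbound
  simpa using hb.cesaro.const_mul 2

theorem tendsto_integral_abs_rpow_of_tendsto_integral_sq {Ω : Type*} [MeasurableSpace Ω]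
    {Q : Measure Ω} [IsProbabilityMeasure Q] {A : ℕ → Ω → ℝ}
    (hA : ∀ n, Measurable (A n)) {B : ℝ} (hAB : ∀ n ω, |A n ω| ≤ B)
    (h2 : Tendsto (fun n => ∫ ω, A n ω ^ 2 ∂Q) atTop (𝓝 0)) {p : ℝ} (hp : 1 ≤ p) :
    Tendsto (fun n => ∫ ω, |A n ω| ^ p ∂Q) atTop (𝓝 0) := by
  have hB : 0 ≤ B := (abs_nonneg _).trans (hAB 0 (nonempty_of_isProbabilityMeasure Q).some)
  have hint (n : ℕ) : Integrable (fun ω => |A n ω|) Q :=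
    .of_bound (hA n).abs.aestronglyMeasurable B (.of_forall fun ω => by simpa using hAB n ω)
  have hL1 (n : ℕ) : ∫ ω, |A n ω| ∂Q ≤ √(∫ ω, A n ω ^ 2 ∂Q) := by
    refine (le_abs_self _).trans (Real.abs_le_sqrt ?_)
    simpa using (even_two.convexOn_pow (𝕜 := ℝ)).map_integral_le (continuous_pow 2).continuousOn
      isClosed_univ (.of_forall fun _ => Set.mem_univ _) (hint n)
      (.of_bound ((hA n).abs.pow_const 2).aestronglyMeasurable (B ^ 2) (.of_forall fun ω => by
        simpa using pow_le_pow_left₀ (abs_nonneg _) (hAB n ω) 2))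
  have hpow (n : ℕ) (ω : Ω) : |A n ω| ^ p ≤ B ^ (p - 1) * |A n ω| := by
    rw [show p = (p - 1) + 1 by ring, Real.rpow_add' (abs_nonneg _) (by linarith),
      Real.rpow_one, add_sub_cancel_right]
    exact mul_le_mul_of_nonneg_right
      (Real.rpow_le_rpow (abs_nonneg _) (hAB n ω) (by linarith)) (abs_nonneg _)
  have hbound (n : ℕ) : ∫ ω, |A n ω| ^ p ∂Q ≤ B ^ (p - 1) * √(∫ ω, A n ω ^ 2 ∂Q) :=
    calc ∫ ω, |A n ω| ^ p ∂Q ≤ ∫ ω, B ^ (p - 1) * |A n ω| ∂Q :=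
          integral_mono_of_nonneg (.of_forall fun ω => by positivity) ((hint n).const_mul _)
            (.of_forall (hpow n))
      _ = B ^ (p - 1) * ∫ ω, |A n ω| ∂Q := integral_const_mul _ _
      _ ≤ B ^ (p - 1) * √(∫ ω, A n ω ^ 2 ∂Q) :=
          mul_le_mul_of_nonneg_left (hL1 n) (Real.rpow_nonneg hB _)
  refine tendsto_of_tendsto_of_tendsto_of_le_of_le tendsto_const_nhds ?_
    (fun n => integral_nonneg fun ω => by positivity) hbound
  simpa using h2.sqrt.const_mul (B ^ (p - 1))

theorem integral_mul_eq_of_condExp_ae_eq {Ω : Type*} {m mΩ : MeasurableSpace Ω} (hm : m ≤ mΩ)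
    {μ : Measure Ω} [IsFiniteMeasure μ] {φ ψ χ : Ω → ℝ} (hφ : StronglyMeasurable[m] φ) {C : ℝ}
    (hφC : ∀ ω, |φ ω| ≤ C) (hψ : Integrable ψ μ) (hχ : μ[ψ|m] =ᵐ[μ] χ) :
    ∫ ω, φ ω * ψ ω ∂μ = ∫ ω, φ ω * χ ω ∂μ := by
  have : IsFiniteMeasure (μ.trim hm) := isFiniteMeasure_trim hm
  calc ∫ ω, φ ω * ψ ω ∂μ = ∫ ω, (μ[φ * ψ|m]) ω ∂μ := (integral_condExp hm).symm
    _ = ∫ ω, φ ω * χ ω ∂μ := integral_congr_ae <| by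
        filter_upwards [condExp_stronglyMeasurable_mul_of_bound hm hφ hψ C
          (.of_forall hφC), hχ] with ω h1 h2
        rw [h1, Pi.mul_apply, h2]

section Wasserstein

variable {S : Type*} [PseudoMetricSpace S] {φ : S → ℝ} {K : ℝ≥0}

lemma LipschitzWith.abs_sub_le_of_dist_le_one (hd : ∀ x y : S, dist x y ≤ 1)
    (hφ : LipschitzWith K φ) (x y : S) : |φ x - φ y| ≤ K := by
  simpa [Real.dist_eq] using (hφ.dist_le_mul x y).trans (mul_le_of_le_one_right K.2 (hd x y))

variable [MeasurableSpace S] [OpensMeasurableSpace S]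

lemma LipschitzWith.integrable_of_dist_le_one (hd : ∀ x y : S, dist x y ≤ 1)
    (hφ : LipschitzWith K φ) (μ : Measure S) [IsProbabilityMeasure μ] : Integrable φ μ := by
  obtain ⟨x₀⟩ := nonempty_of_isProbabilityMeasure μ
  refine .of_bound hφ.continuous.aestronglyMeasurable (|φ x₀| + K) (.of_forall fun x => ?_)
  rw [Real.norm_eq_abs]
  linarith [abs_sub_abs_le_abs_sub (φ x) (φ x₀), hφ.abs_sub_le_of_dist_le_one hd x x₀]

lemma LipschitzWith.abs_sub_integral_le (hd : ∀ x y : S, dist x y ≤ 1)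
    (hφ : LipschitzWith K φ) (μ : Measure S) [IsProbabilityMeasure μ] (x : S) :
    |φ x - ∫ y, φ y ∂μ| ≤ K := by
  have h : φ x - ∫ y, φ y ∂μ = ∫ y, (φ x - φ y) ∂μ := by
    rw [integral_sub (integrable_const _) (hφ.integrable_of_dist_le_one hd μ), integral_const,
      probReal_univ, one_smul]
  rw [h]
  simpa using norm_integral_le_of_norm_le_const (μ := μ)
    (.of_forall fun y => (Real.norm_eq_abs _).trans_le (hφ.abs_sub_le_of_dist_le_one hd x y))

lemma LipschitzWith.abs_le_of_integral_eq_zero (hd : ∀ x y : S, dist x y ≤ 1)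
    (hφ : LipschitzWith K φ) (μ : Measure S) [IsProbabilityMeasure μ] (h0 : ∫ y, φ y ∂μ = 0)
    (x : S) : |φ x| ≤ K := by
  simpa [h0] using hφ.abs_sub_integral_le hd μ x

lemma LipschitzWith.abs_integral_sub_integral_le (hd : ∀ x y : S, dist x y ≤ 1)
    (hφ : LipschitzWith K φ) (μ ν : Measure S) [IsProbabilityMeasure μ] [IsProbabilityMeasure ν] :
    |∫ y, φ y ∂μ - ∫ y, φ y ∂ν| ≤ 2 * K := by
  obtain ⟨x₀⟩ := nonempty_of_isProbabilityMeasure μ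
  have hμ := hφ.abs_sub_integral_le hd μ x₀
  have hν := hφ.abs_sub_integral_le hd ν x₀
  rw [abs_sub_comm] at hμ
  linarith [abs_sub_le (∫ y, φ y ∂μ) (φ x₀) (∫ y, φ y ∂ν)]

lemma bddAbove_range_abs_integral_sub_integral (hd : ∀ x y : S, dist x y ≤ 1) (μ ν : Measure S)
    [IsProbabilityMeasure μ] [IsProbabilityMeasure ν] :
    BddAbove (Set.range fun f : {g : S → ℝ // LipschitzWith 1 g} =>
      |∫ y, f.1 y ∂μ - ∫ y, f.1 y ∂ν|) := by
  refine ⟨2, ?_⟩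
  rintro _ ⟨f, rfl⟩
  simpa using f.2.abs_integral_sub_integral_le hd μ ν

lemma abs_integral_sub_integral_le_wassDist (hd : ∀ x y : S, dist x y ≤ 1)
    (hφ : LipschitzWith 1 φ) (μ ν : Measure S) [IsProbabilityMeasure μ] [IsProbabilityMeasure ν] :
    |∫ y, φ y ∂μ - ∫ y, φ y ∂ν| ≤ wassDist μ ν :=
  le_ciSup (bddAbove_range_abs_integral_sub_integral hd μ ν) ⟨φ, hφ⟩

lemma wassDist_nonneg (hd : ∀ x y : S, dist x y ≤ 1) (μ ν : Measure S)
    [IsProbabilityMeasure μ] [IsProbabilityMeasure ν] : 0 ≤ wassDist μ ν := by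
  simpa using abs_integral_sub_integral_le_wassDist hd (LipschitzWith.const' 0) μ ν

lemma wassDist_le_two (hd : ∀ x y : S, dist x y ≤ 1) (μ ν : Measure S)
    [IsProbabilityMeasure μ] [IsProbabilityMeasure ν] : wassDist μ ν ≤ 2 := by
  have : Nonempty {g : S → ℝ // LipschitzWith 1 g} := ⟨⟨0, LipschitzWith.const' 0⟩⟩
  exact ciSup_le fun f => by simpa using f.2.abs_integral_sub_integral_le hd μ ν

lemma LipschitzWith.abs_integral_sub_integral_le_mul_wassDist (hd : ∀ x y : S, dist x y ≤ 1)
    (hφ : LipschitzWith K φ) (μ ν : Measure S) [IsProbabilityMeasure μ] [IsProbabilityMeasure ν] :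
    |∫ y, φ y ∂μ - ∫ y, φ y ∂ν| ≤ K * wassDist μ ν := by
  rcases eq_or_ne K 0 with rfl | hK
  · simpa using hφ.abs_integral_sub_integral_le hd μ ν
  have hK' : (0 : ℝ) < K := by positivity
  have hψ : LipschitzWith 1 fun x => (K : ℝ)⁻¹ * φ x := .of_le_add fun x y => by
    rw [← mul_le_mul_iff_of_pos_left hK', mul_add, ← mul_assoc, ← mul_assoc,
      mul_inv_cancel₀ hK'.ne', one_mul, one_mul]
    exact hφ.le_add_mul x y
  have h := abs_integral_sub_integral_le_wassDist hd hψ μ ν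
  rwa [integral_const_mul, integral_const_mul, ← mul_sub, abs_mul, abs_of_pos (inv_pos.2 hK'),
    inv_mul_le_iff₀ hK'] at h

end Wasserstein

section CountableReduction

variable {S : Type*} [PseudoMetricSpace S]

lemma lipschitzWith_iInf_add_dist {ι : Type*} [Finite ι] (a : ι → ℝ) (z : ι → S) :
    LipschitzWith 1 fun x => ⨅ i, (a i + dist x (z i)) := by
  refine .of_le_add fun x y => ?_
  rcases isEmpty_or_nonempty ι with hι | hι
  · simp
  rw [← sub_le_iff_le_add]
  refine le_ciInf fun i => ?_
  have := ciInf_le (Set.finite_range fun i => a i + dist x (z i)).bddBelow i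
  linarith [dist_triangle x y (z i)]

noncomputable def ratInfDist (D : ℕ → S) (q : Σ n, Fin n → ℚ) (x : S) : ℝ :=
  ⨅ i : Fin q.1, ((q.2 i : ℝ) + dist x (D i))

lemma lipschitzWith_ratInfDist (D : ℕ → S) (q : Σ n, Fin n → ℚ) :
    LipschitzWith 1 (ratInfDist D q) :=
  lipschitzWith_iInf_add_dist _ _

lemma exists_tendsto_ratInfDist (hd : ∀ x y : S, dist x y ≤ 1) {D : ℕ → S} (hD : DenseRange D)
    {φ : S → ℝ} (hφ : LipschitzWith 1 φ) :
    ∃ q : ℕ → Σ n, Fin n → ℚ, (∀ n x, |ratInfDist D (q n) x| ≤ |φ (D 0)| + 2) ∧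
      ∀ x, Tendsto (fun n => ratInfDist D (q n) x) atTop (𝓝 (φ x)) := by
  choose r hr_gt hr_lt using fun (n : ℕ) (i : ℕ) =>
    exists_rat_btwn (lt_add_of_pos_right (φ (D i)) (Nat.one_div_pos_of_nat (n := n)))
  set F : ℕ → S → ℝ := fun n => ratInfDist D ⟨n + 1, fun i => r n i⟩
  have hφ_dist (x y : S) : φ x ≤ φ y + dist x y := by simpa using hφ.le_add_mul x y
  have hφ_le (n : ℕ) (x : S) : φ x ≤ F n x := le_ciInf fun i => by
    linarith [hφ_dist x (D i), hr_gt n i]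
  have hle_at (n : ℕ) (x : S) {i : ℕ} (hi : i ≤ n) : F n x ≤ r n i + dist x (D i) :=
    ciInf_le (Set.finite_range _).bddBelow (⟨i, Nat.lt_succ_of_le hi⟩ : Fin (n + 1))
  refine ⟨fun n => ⟨n + 1, fun i => r n i⟩, fun n x => abs_le.2 ⟨?_, ?_⟩, fun x => ?_⟩
  · show _ ≤ F n x
    linarith [hφ_le n x, neg_abs_le (φ (D 0)), hφ_dist (D 0) x, hd (D 0) x]
  · show F n x ≤ _
    have : (1 : ℝ) / (n + 1) ≤ 1 := by
      rw [div_le_one (by positivity)]; linarith [(n.cast_nonneg : (0 : ℝ) ≤ n)]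
    linarith [hle_at n x (Nat.zero_le n), hr_lt n 0, hd x (D 0), le_abs_self (φ (D 0))]
  refine tendsto_order.2 ⟨fun a ha => .of_forall fun n => ha.trans_le (hφ_le n x), fun a ha => ?_⟩
  obtain ⟨i, hi⟩ := Metric.denseRange_iff.1 hD x ((a - φ x) / 3) (by linarith)
  obtain ⟨N, hN⟩ := exists_nat_one_div_lt (show 0 < (a - φ x) / 3 by linarith)
  filter_upwards [eventually_ge_atTop (max i N)] with n hn
  have hnN : (1 : ℝ) / (n + 1) ≤ 1 / (N + 1) :=
    Nat.one_div_le_one_div (le_of_max_le_right hn)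
  show F n x < a
  linarith [hle_at n x (le_of_max_le_left hn), hr_lt n i, hφ_dist (D i) x, dist_comm x (D i)]

variable [MeasurableSpace S] [OpensMeasurableSpace S]

lemma wassDist_eq_iSup_ratInfDist (hd : ∀ x y : S, dist x y ≤ 1) {D : ℕ → S}
    (hD : DenseRange D) (μ ν : Measure S) [IsProbabilityMeasure μ] [IsProbabilityMeasure ν] :
    wassDist μ ν = ⨆ q : Σ n, Fin n → ℚ,
      |∫ y, ratInfDist D q y ∂μ - ∫ y, ratInfDist D q y ∂ν| := by
  have hbdd : BddAbove (Set.range fun q : Σ n, Fin n → ℚ =>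
      |∫ y, ratInfDist D q y ∂μ - ∫ y, ratInfDist D q y ∂ν|) := by
    refine ⟨2, ?_⟩
    rintro _ ⟨q, rfl⟩
    simpa using (lipschitzWith_ratInfDist D q).abs_integral_sub_integral_le hd μ ν
  have : Nonempty {g : S → ℝ // LipschitzWith 1 g} := ⟨⟨0, LipschitzWith.const' 0⟩⟩
  refine le_antisymm (ciSup_le fun φ => ?_)
    (ciSup_le fun q => abs_integral_sub_integral_le_wassDist hd (lipschitzWith_ratInfDist D q) μ ν)
  obtain ⟨q, hq_bound, hq_tendsto⟩ := exists_tendsto_ratInfDist hd hD φ.2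
  have hint (ρ : Measure S) [IsFiniteMeasure ρ] :
      Tendsto (fun n => ∫ y, ratInfDist D (q n) y ∂ρ) atTop (𝓝 (∫ y, φ.1 y ∂ρ)) :=
    tendsto_integral_of_dominated_convergence _
      (fun n => (lipschitzWith_ratInfDist D (q n)).continuous.aestronglyMeasurable)
      (integrable_const (|φ.1 (D 0)| + 2)) (fun n => .of_forall (hq_bound n))
      (.of_forall hq_tendsto)
  exact le_of_tendsto' ((hint μ).sub (hint ν)).abs fun n => le_ciSup hbdd (q n)

theorem measurable_wassDist [TopologicalSpace.SeparableSpace S] (hd : ∀ x y : S, dist x y ≤ 1)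
    {T : Type*} [MeasurableSpace T] (κ : Kernel T S) [IsMarkovKernel κ]
    (ν : Measure S) [IsProbabilityMeasure ν] :
    Measurable fun y => wassDist (κ y) ν := by
  have := nonempty_of_isProbabilityMeasure ν
  simp_rw [wassDist_eq_iSup_ratInfDist hd (TopologicalSpace.denseRange_denseSeq S)]
  exact .iSup fun q => ((lipschitzWith_ratInfDist _ q).continuous.stronglyMeasurable
    |>.integral_kernel.measurable.sub_const _).abs

end CountableReduction

namespace DiscreteMarkovProcess

variable {S Ω : Type*} [MeasurableSpace S] [MeasurableSpace Ω] (X : DiscreteMarkovProcess S Ω)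

instance (x : S) : IsProbabilityMeasure (X.P x) := X.prob x

noncomputable def kernel : Kernel S Ω := ⟨X.P, X.measP⟩

instance : IsMarkovKernel X.kernel := ⟨X.prob⟩

instance (μ : Measure S) [IsProbabilityMeasure μ] : IsProbabilityMeasure (μ.bind X.P) :=
  inferInstanceAs (IsProbabilityMeasure (X.kernel ∘ₘ μ))

noncomputable def transitionKernel (n : ℕ) : Kernel S S := X.kernel.map (X.M n)

instance (n : ℕ) : IsMarkovKernel (X.transitionKernel n) :=
  Kernel.IsMarkovKernel.map _ (X.measM n)

lemma transitionKernel_apply (n : ℕ) (x : S) : X.transitionKernel n x = X.p n x :=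
  Kernel.map_apply _ (X.measM n) x

instance (n : ℕ) (x : S) : IsProbabilityMeasure (X.p n x) := by
  rw [← transitionKernel_apply]; infer_instance

lemma integral_p {g : S → ℝ} (hg : Measurable g) (n : ℕ) (x : S) :
    ∫ y, g y ∂(X.p n x) = ∫ ω, g (X.M n ω) ∂(X.P x) :=
  integral_map (X.measM n).aemeasurable hg.aestronglyMeasurable

lemma measurable_integral_p {g : S → ℝ} (hg : Measurable g) (n : ℕ) :
    Measurable fun x => ∫ y, g y ∂(X.p n x) := by
  simp_rw [← transitionKernel_apply]
  exact hg.stronglyMeasurable.integral_kernel.measurable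

lemma integral_bind {F : Ω → ℝ} (μ : Measure S) [IsProbabilityMeasure μ]
    (hF : Integrable F (μ.bind X.P)) :
    ∫ ω, F ω ∂(μ.bind X.P) = ∫ x, ∫ ω, F ω ∂(X.P x) ∂μ := by
  change Integrable F (X.kernel ∘ₘ μ) at hF
  change ∫ ω, F ω ∂(X.kernel ∘ₘ μ) = _
  rw [Measure.comp_eq_comp_const_apply] at hF ⊢
  rw [Kernel.integral_comp hF]
  simp [kernel]

abbrev past (s : ℕ) : MeasurableSpace Ω :=
  ⨆ u : {u : ℕ // u ≤ s}, MeasurableSpace.comap (X.M u.1) inferInstance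

lemma past_le (s : ℕ) : X.past s ≤ ‹MeasurableSpace Ω› :=
  iSup_le fun u => (X.measM u.1).comap_le

lemma measurable_M_past (s : ℕ) : Measurable[X.past s] (X.M s) :=
  measurable_iff_comap_le.2 <|
    le_iSup (fun u : {u : ℕ // u ≤ s} => MeasurableSpace.comap (X.M u.1) inferInstance) ⟨s, le_rfl⟩

lemma integrable_mul_comp {g : S → ℝ} (hg : Measurable g) {B : ℝ} (hgB : ∀ y, |g y| ≤ B)
    (j k : ℕ) (Q : Measure Ω) [IsFiniteMeasure Q] :
    Integrable (fun ω => g (X.M j ω) * g (X.M k ω)) Q :=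
  .of_bound ((hg.comp (X.measM j)).mul (hg.comp (X.measM k))).aestronglyMeasurable (B * B)
    (.of_forall fun ω => by
      rw [Real.norm_eq_abs, abs_mul]
      exact mul_le_mul (hgB _) (hgB _) (abs_nonneg _) ((abs_nonneg _).trans (hgB (X.M j ω))))

variable [PseudoMetricSpace S] [OpensMeasurableSpace S] [TopologicalSpace.SeparableSpace S]
  (π : Measure S) [IsProbabilityMeasure π]

noncomputable def mixingRate (t : ℕ) (x : S) : ℝ := ⨆ m : ℕ, ∫ y, wassDist (X.p t y) π ∂(X.p m x)

variable {X π}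

lemma measurable_wassDist_p (hd : ∀ x y : S, dist x y ≤ 1) (t : ℕ) :
    Measurable fun y => wassDist (X.p t y) π := by
  simpa only [transitionKernel_apply] using measurable_wassDist hd (X.transitionKernel t) π

lemma integrable_wassDist_p (hd : ∀ x y : S, dist x y ≤ 1) (t : ℕ) (ρ : Measure S)
    [IsFiniteMeasure ρ] : Integrable (fun y => wassDist (X.p t y) π) ρ :=
  .of_bound (measurable_wassDist_p hd t).aestronglyMeasurable 2 (.of_forall fun y => by
    rw [Real.norm_eq_abs, abs_of_nonneg (wassDist_nonneg hd (X.p t y) π)]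
    exact wassDist_le_two hd (X.p t y) π)

lemma integral_wassDist_p_mem_Icc (hd : ∀ x y : S, dist x y ≤ 1) (t m : ℕ) (x : S) :
    ∫ y, wassDist (X.p t y) π ∂(X.p m x) ∈ Set.Icc 0 2 := by
  refine ⟨integral_nonneg fun y => wassDist_nonneg hd (X.p t y) π, ?_⟩
  calc ∫ y, wassDist (X.p t y) π ∂(X.p m x) ≤ ∫ _, (2 : ℝ) ∂(X.p m x) :=
        integral_mono (integrable_wassDist_p hd t _) (integrable_const 2)
          fun y => wassDist_le_two hd (X.p t y) π
    _ = 2 := by simp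

lemma integral_wassDist_p_le_mixingRate (hd : ∀ x y : S, dist x y ≤ 1) (t m : ℕ) (x : S) :
    ∫ y, wassDist (X.p t y) π ∂(X.p m x) ≤ X.mixingRate π t x :=
  le_ciSup (f := fun m => ∫ y, wassDist (X.p t y) π ∂(X.p m x))
    ⟨2, by rintro _ ⟨m, rfl⟩; exact (integral_wassDist_p_mem_Icc hd t m x).2⟩ m

lemma norm_mixingRate_le (hd : ∀ x y : S, dist x y ≤ 1) (t : ℕ) (x : S) :
    ‖X.mixingRate π t x‖ ≤ 2 := by
  rw [Real.norm_eq_abs, abs_of_nonneg ((integral_wassDist_p_mem_Icc hd t 0 x).1.trans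
    (integral_wassDist_p_le_mixingRate hd t 0 x))]
  exact ciSup_le fun m => (integral_wassDist_p_mem_Icc hd t m x).2

lemma measurable_mixingRate (hd : ∀ x y : S, dist x y ≤ 1) (t : ℕ) :
    Measurable (X.mixingRate π t) :=
  .iSup fun m => X.measurable_integral_p (measurable_wassDist_p hd t) m

lemma integrable_mixingRate (hd : ∀ x y : S, dist x y ≤ 1) (t : ℕ) (μ : Measure S)
    [IsFiniteMeasure μ] : Integrable (X.mixingRate π t) μ :=
  .of_bound (measurable_mixingRate hd t).aestronglyMeasurable 2
    (.of_forall (norm_mixingRate_le hd t))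

lemma tendsto_integral_mixingRate (hd : ∀ x y : S, dist x y ≤ 1)
    (hconv : ∀ x, Tendsto (fun t => X.mixingRate π t x) atTop (𝓝 0))
    (μ : Measure S) [IsProbabilityMeasure μ] :
    Tendsto (fun t => ∫ x, X.mixingRate π t x ∂μ) atTop (𝓝 0) := by
  simpa using tendsto_integral_of_dominated_convergence (fun _ => 2)
    (fun t => (measurable_mixingRate hd t).aestronglyMeasurable) (integrable_const 2)
    (fun t => .of_forall (norm_mixingRate_le hd t)) (.of_forall hconv)

lemma abs_integral_mul_le_mixingRate (hd : ∀ x y : S, dist x y ≤ 1) {g : S → ℝ} {K : ℝ≥0}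
    (hg : LipschitzWith K g) (hg0 : ∫ y, g y ∂π = 0) (x : S) (s t : ℕ) :
    |∫ ω, g (X.M s ω) * g (X.M (s + t) ω) ∂(X.P x)| ≤ K ^ 2 * X.mixingRate π t x := by
  have hgK := hg.abs_le_of_integral_eq_zero hd π hg0
  have hgm := hg.continuous.measurable
  set h : S → ℝ := fun y => ∫ z, g z ∂(X.p t y)
  have hhW (y : S) : |h y| ≤ K * wassDist (X.p t y) π := by
    simpa [hg0] using hg.abs_integral_sub_integral_le_mul_wassDist hd (X.p t y) π
  have hmarkov : ∫ ω, g (X.M s ω) * g (X.M (s + t) ω) ∂(X.P x)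
      = ∫ y, g y * h y ∂(X.p s x) := by
    rw [X.integral_p (g := fun y => g y * h y) (hgm.mul (X.measurable_integral_p hgm t))]
    exact integral_mul_eq_of_condExp_ae_eq (X.past_le s)
      (hgm.comp (X.measurable_M_past s)).stronglyMeasurable (fun _ => hgK _)
      (.of_bound (hgm.comp (X.measM _)).aestronglyMeasurable K
        (.of_forall fun _ => (Real.norm_eq_abs _).trans_le (hgK _)))
      (X.markov x s t g hgm ⟨K, hgK⟩)
  rw [hmarkov]
  calc |∫ y, g y * h y ∂(X.p s x)| ≤ ∫ y, |g y * h y| ∂(X.p s x) := abs_integral_le_integral_abs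
    _ ≤ ∫ y, K ^ 2 * wassDist (X.p t y) π ∂(X.p s x) :=
        integral_mono_of_nonneg (.of_forall fun _ => abs_nonneg _)
          ((integrable_wassDist_p hd t _).const_mul _) (.of_forall fun y => by
            dsimp only
            rw [abs_mul, sq, mul_assoc]
            exact mul_le_mul (hgK y) (hhW y) (abs_nonneg _) K.2)
    _ = K ^ 2 * ∫ y, wassDist (X.p t y) π ∂(X.p s x) := integral_const_mul _ _
    _ ≤ K ^ 2 * X.mixingRate π t x :=
        mul_le_mul_of_nonneg_left (integral_wassDist_p_le_mixingRate hd t s x) (sq_nonneg _)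

lemma abs_integral_bind_mul_le (hd : ∀ x y : S, dist x y ≤ 1) {g : S → ℝ} {K : ℝ≥0}
    (hg : LipschitzWith K g) (hg0 : ∫ y, g y ∂π = 0) (μ : Measure S) [IsProbabilityMeasure μ]
    (j k : ℕ) :
    |∫ ω, g (X.M j ω) * g (X.M k ω) ∂(μ.bind X.P)|
      ≤ K ^ 2 * ∫ x, X.mixingRate π (Nat.dist j k) x ∂μ := by
  wlog hjk : j ≤ k generalizing j k
  · rw [Nat.dist_comm]
    simpa only [mul_comm] using this k j (le_of_not_ge hjk)
  obtain ⟨t, rfl⟩ := Nat.exists_eq_add_of_le hjk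
  have hgK := hg.abs_le_of_integral_eq_zero hd π hg0
  rw [Nat.dist_eq_sub_of_le hjk, add_tsub_cancel_left,
    X.integral_bind μ (X.integrable_mul_comp hg.continuous.measurable hgK _ _ _)]
  calc |∫ x, ∫ ω, g (X.M j ω) * g (X.M (j + t) ω) ∂(X.P x) ∂μ|
      ≤ ∫ x, |∫ ω, g (X.M j ω) * g (X.M (j + t) ω) ∂(X.P x)| ∂μ := abs_integral_le_integral_abs
    _ ≤ ∫ x, K ^ 2 * X.mixingRate π t x ∂μ :=
        integral_mono_of_nonneg (.of_forall fun _ => abs_nonneg _)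
          ((integrable_mixingRate hd t μ).const_mul _)
          (.of_forall fun x => abs_integral_mul_le_mixingRate hd hg hg0 x j t)
    _ = K ^ 2 * ∫ x, X.mixingRate π t x ∂μ := integral_const_mul _ _

end DiscreteMarkovProcess

theorem birkhoff_discrete_Lp_general
    {S : Type} [MeasurableSpace S] [MetricSpace S] [PolishSpace S] [BorelSpace S]
    (hd : ∀ x y : S, dist x y ≤ 1)
    {Ω : Type} [MeasurableSpace Ω] (X : DiscreteMarkovProcess S Ω)
    (π : Measure S) [IsProbabilityMeasure π]
    (hconv : ∀ x : S, Tendsto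
      (fun n : ℕ => ⨆ m : ℕ, ∫ y, wassDist (X.p n y) π ∂(X.p m x)) atTop (𝓝 0))
    (p : ℝ) (hp : 1 ≤ p)
    (f : S → ℝ) (hfl : ∃ K : NNReal, LipschitzWith K f)
    (μ : Measure S) [IsProbabilityMeasure μ] :
    Tendsto (fun n : ℕ => ∫ ω, |(n : ℝ)⁻¹ * (∑ k ∈ Finset.range n, f (X.M k ω)) - (∫ y, f y ∂π)| ^ p ∂(μ.bind X.P)) atTop (𝓝 0) := by
  obtain ⟨K, hf⟩ := hfl
  set c := ∫ y, f y ∂π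
  have hg : LipschitzWith K fun y => f y - c := by simpa using hf.sub (LipschitzWith.const c)
  have hg0 : ∫ y, (f y - c) ∂π = 0 := by
    rw [integral_sub (hf.integrable_of_dist_le_one hd π) (integrable_const c)]
    simp [c]
  have hgK := hg.abs_le_of_integral_eq_zero hd π hg0
  have hL2 := tendsto_integral_sq_average_of_abs_integral_mul_le
    (b := fun t => K ^ 2 * ∫ x, X.mixingRate π t x ∂μ)
    (X.integrable_mul_comp hg.continuous.measurable hgK · · _)
    (by simpa using (X.tendsto_integral_mixingRate hd hconv μ).const_mul (K ^ 2 : ℝ))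
    (X.abs_integral_bind_mul_le hd hg hg0 μ)
  have hLp := tendsto_integral_abs_rpow_of_tendsto_integral_sq
    (A := fun n ω => (n : ℝ)⁻¹ * ∑ k ∈ range n, (f (X.M k ω) - c))
    (fun n => (Finset.measurable_sum _ fun k _ =>
      hg.continuous.measurable.comp (X.measM k)).const_mul _)
    (fun n ω => abs_inv_mul_sum_range_le (fun k => hgK (X.M k ω)) n) hL2 hp
  refine hLp.congr' ?_
  filter_upwards [eventually_ne_atTop 0] with n hn
  congr! 4 with ω
  rw [sum_sub_distrib, sum_const, card_range, nsmul_eq_mul, mul_sub,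
    inv_mul_cancel_left₀ (Nat.cast_ne_zero.2 hn)]

/-- If a discrete-time Markov process admits a probability measure `π` with
`lim_n sup_m ∫ d_W(p^n(y,·),π) p^m(x,dy) = 0` for every `x`, then for every `p ≥ 1`, every
bounded Lipschitz `f` and every initial distribution `μ`, the time averages converge to
`∫ f dπ` in `L^p(Ω, P^μ)`. -/
theorem birkhoff_discrete_Lp
    {S : Type} [MeasurableSpace S] [MetricSpace S] [PolishSpace S] [BorelSpace S]
    (hd : ∀ x y : S, dist x y ≤ 1)
    {Ω : Type} [MeasurableSpace Ω] (X : DiscreteMarkovProcess S Ω)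
    (π : Measure S) [IsProbabilityMeasure π]
    (hconv : ∀ x : S, Tendsto
      (fun n : ℕ => ⨆ m : ℕ, ∫ y, wassDist (X.p n y) π ∂(X.p m x)) atTop (𝓝 0))
    (p : ℝ) (hp : 1 ≤ p)
    (f : S → ℝ) (hfl : ∃ K : NNReal, LipschitzWith K f) (hfb : ∃ C : ℝ, ∀ z : S, |f z| ≤ C)
    (μ : Measure S) [IsProbabilityMeasure μ] :
    Tendsto (fun n : ℕ => ∫ ω, |(n : ℝ)⁻¹ * (∑ k ∈ Finset.range n, f (X.M k ω)) - (∫ y, f y ∂π)| ^ p ∂(μ.bind X.P)) atTop (𝓝 0) :=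
  birkhoff_discrete_Lp_general hd X π hconv p hp f hfl μ
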